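/- arXiv:math/9911113 — 2 statements merged into one kernel-verified Lean document; each statement's English description precedes it below -/
import Mathlib

section
/- Let D be a strongly connected simple digraph on n > 2 vertices, let u, v be vertices joined by a double arc (both (u,v) and (v,u) are edges), with d_D(v) ≥ n, and suppose D − u is not strongly connected. Let J = D/{u,v} be the contraction of {u,v} to a single vertex w. Then d_J(w) ≥ n − 1. -/
/-- A digraph (given by its adjacency relation) is strongly connected if every
vertex is reachable from every other vertex by a directed path. -/
def StronglyConnected {V : Type*} (G : V → V → Prop) : Prop :=
  ∀ a b : V, Relation.ReflTransGen G a b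

/-- The digraph obtained from `G` by deleting the vertex `z`. -/
def DelVert {V : Type*} (G : V → V → Prop) (z : V) :
    {x : V // x ≠ z} → {x : V // x ≠ z} → Prop :=
  fun a b => G a.1 b.1

/-- The digraph obtained from `G` by deleting the vertex set `A`. -/
def DelSet {V : Type*} (G : V → V → Prop) (A : Set V) :
    {x : V // x ∉ A} → {x : V // x ∉ A} → Prop :=
  fun a b => G a.1 b.1

/-- The contraction `D/A`: the set `A` is replaced by a single new vertex
(represented by `none`) whose out-neighbors are `⋃ v ∈ A, E⁺(v) \ A` and whose
in-neighbors are `⋃ v ∈ A, E⁻(v) \ A`; edges outside `A` are preserved. -/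
def Contract {V : Type*} (G : V → V → Prop) (A : Set V) :
    Option {x : V // x ∉ A} → Option {x : V // x ∉ A} → Prop
  | some u, some w => G u.1 w.1
  | none, some w => ∃ x ∈ A, G x w.1
  | some u, none => ∃ x ∈ A, G u.1 x
  | none, none => False

/-- The degree of a vertex: `|E⁺(v)| + |E⁻(v)|`. -/
noncomputable def deg {V : Type*} (G : V → V → Prop) (v : V) : ℕ :=
  {u | G v u}.ncard + {u | G u v}.ncard

/-- The number of directed edges of the digraph. -/
noncomputable def edgeCount {V : Type*} (G : V → V → Prop) : ℕ :=
  {p : V × V | G p.1 p.2}.ncard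

/-- A digraph is vertex-critical strongly connected if it is strongly connected
and the removal of any vertex destroys strong connectivity. -/
def Critical {V : Type*} (G : V → V → Prop) : Prop :=
  StronglyConnected G ∧ ∀ z : V, ¬ StronglyConnected (DelVert G z)

/-- `v : ZMod k → V` enumerates a chordless directed cycle of `G`:
the vertices are distinct, consecutive vertices are joined by the cycle edges,
and these are the only edges of `G` among the vertices of the cycle. -/
structure IsChordlessCycle {V : Type*} (G : V → V → Prop) {k : ℕ} (v : ZMod k → V) : Prop where
  inj : Function.Injective v
  edges : ∀ i, G (v i) (v (i + 1))
  chordless : ∀ i j, G (v i) (v j) → j = i + 1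

lemma aux_del {V : Type*} (G : V → V → Prop) (hirr : Irreflexive G)
    (hsc : StronglyConnected G) (u v : V) (hvu : G v u)
    (hout : ∀ x, x ≠ u → x ≠ v → G u x → G v x)
    (hin : ∀ x, x ≠ u → x ≠ v → G x u → G x v) :
    StronglyConnected (DelVert G u) := by
  classical
  set H : V → V → Prop := fun x y => x ≠ u ∧ y ≠ u ∧ G x y with hH
  set f : V → V := fun x => if x = u then v else x with hf
  have hne : v ≠ u := fun h => hirr u (h ▸ hvu)
  have step : ∀ x y : V, G x y → Relation.ReflTransGen H (f x) (f y) := by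
    intro x y hxy
    by_cases hx : x = u
    · by_cases hy : y = u
      · exact absurd (by rwa [hx, hy] at hxy) (hirr u)
      · simp only [hf, hx, if_pos rfl, if_neg hy]
        by_cases hyv : y = v
        · exact hyv ▸ Relation.ReflTransGen.refl
        · exact Relation.ReflTransGen.single ⟨hne, hy, hout y hy hyv (hx ▸ hxy)⟩
    · by_cases hy : y = u
      · simp only [hf, if_neg hx, hy, if_pos rfl]
        by_cases hxv : x = v
        · exact hxv ▸ Relation.ReflTransGen.refl
        · exact Relation.ReflTransGen.single ⟨hx, hne, hin x hx hxv (hy ▸ hxy)⟩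
      · simp only [hf, if_neg hx, if_neg hy]
        exact Relation.ReflTransGen.single ⟨hx, hy, hxy⟩
  have walk : ∀ a b : V, Relation.ReflTransGen H (f a) (f b) := by
    intro a b
    have h := hsc a b
    induction h with
    | refl => exact Relation.ReflTransGen.refl
    | tail _ hstep ih => exact ih.trans (step _ _ hstep)
  have lift : ∀ {a b : V}, Relation.ReflTransGen H a b → ∀ (ha : a ≠ u) (hb : b ≠ u),
      Relation.ReflTransGen (DelVert G u) ⟨a, ha⟩ ⟨b, hb⟩ := by
    intro a b hab
    induction hab with
    | refl => intro ha hb; exact Relation.ReflTransGen.refl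
    | tail _ hcb ih => intro ha hb; exact (ih ha hcb.1).tail hcb.2.2
  intro a b
  have := walk a.1 b.1
  rw [show f a.1 = a.1 from if_neg a.2, show f b.1 = b.1 from if_neg b.2] at this
  exact lift this a.2 b.2

theorem stmt14 {V : Type*} [Fintype V] (G : V → V → Prop) (n : ℕ)
    (hn : Fintype.card V = n) (h2 : 2 < n) (hirr : Irreflexive G)
    (hsc : StronglyConnected G) (u v : V) (huv : G u v) (hvu : G v u)
    (hdeg : n ≤ deg G v) (hu : ¬ StronglyConnected (DelVert G u)) :
    n - 1 ≤ deg (Contract G ({u, v} : Set V))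
      (none : Option {x : V // x ∉ ({u, v} : Set V)}) := by
  classical
  set A : Set V := {u, v} with hA
  have huvne : u ≠ v := fun h => hirr u (h ▸ huv)
  set P : Set V := {x | G v x} with hP
  set Q : Set V := {x | G x v} with hQ
  set Sp : Set V := {x | x ∉ A ∧ ∃ a ∈ A, G a x} with hSp
  set Sm : Set V := {x | x ∉ A ∧ ∃ a ∈ A, G x a} with hSm
  -- identify the degree of the contracted vertex
  have houtset : {o : Option {x : V // x ∉ A} | Contract G A none o}
      = some '' {w : {x : V // x ∉ A} | ∃ a ∈ A, G a w.1} := by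
    ext o
    cases o with
    | none => simp [Contract]
    | some w => simp [Contract]
  have hinset : {o : Option {x : V // x ∉ A} | Contract G A o none}
      = some '' {w : {x : V // x ∉ A} | ∃ a ∈ A, G w.1 a} := by
    ext o
    cases o with
    | none => simp [Contract]
    | some w => simp [Contract]
  have hvalp : Subtype.val '' {w : {x : V // x ∉ A} | ∃ a ∈ A, G a w.1} = Sp := by
    ext x
    simp only [Set.mem_image, Set.mem_setOf_eq, hSp]
    constructor
    · rintro ⟨⟨y, hy⟩, h1, rfl⟩; exact ⟨hy, h1⟩
    · rintro ⟨hx, h1⟩; exact ⟨⟨x, hx⟩, h1, rfl⟩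
  have hvalm : Subtype.val '' {w : {x : V // x ∉ A} | ∃ a ∈ A, G w.1 a} = Sm := by
    ext x
    simp only [Set.mem_image, Set.mem_setOf_eq, hSm]
    constructor
    · rintro ⟨⟨y, hy⟩, h1, rfl⟩; exact ⟨hy, h1⟩
    · rintro ⟨hx, h1⟩; exact ⟨⟨x, hx⟩, h1, rfl⟩
  have hdegw : deg (Contract G A) none = Sp.ncard + Sm.ncard := by
    unfold deg
    rw [houtset, hinset, Set.ncard_image_of_injective _ (Option.some_injective _),
      Set.ncard_image_of_injective _ (Option.some_injective _),
      ← hvalp, ← hvalm,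
      Set.ncard_image_of_injective _ Subtype.val_injective,
      Set.ncard_image_of_injective _ Subtype.val_injective]
  rw [hdegw]
  -- basic memberships
  have hPu : u ∈ P := hvu
  have hQu : u ∈ Q := huv
  have hsubp : P \ {u} ⊆ Sp := by
    rintro x ⟨hx, hxu⟩
    refine ⟨?_, v, Or.inr rfl, hx⟩
    rintro (rfl | rfl)
    · exact hxu rfl
    · exact hirr x hx
  have hsubm : Q \ {u} ⊆ Sm := by
    rintro x ⟨hx, hxu⟩
    refine ⟨?_, v, Or.inr rfl, hx⟩
    rintro (rfl | rfl)
    · exact hxu rfl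
    · exact hirr x hx
  have hPcard : (P \ {u}).ncard = P.ncard - 1 := Set.ncard_diff_singleton_of_mem hPu
  have hQcard : (Q \ {u}).ncard = Q.ncard - 1 := Set.ncard_diff_singleton_of_mem hQu
  have hP1 : 1 ≤ P.ncard := (Set.ncard_pos (Set.toFinite _)).mpr ⟨u, hPu⟩
  have hQ1 : 1 ≤ Q.ncard := (Set.ncard_pos (Set.toFinite _)).mpr ⟨u, hQu⟩
  have hle1 : P.ncard - 1 ≤ Sp.ncard := hPcard ▸ Set.ncard_le_ncard hsubp (Set.toFinite _)
  have hle2 : Q.ncard - 1 ≤ Sm.ncard := hQcard ▸ Set.ncard_le_ncard hsubm (Set.toFinite _)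
  have hPQ : n ≤ P.ncard + Q.ncard := hdeg
  by_cases hcase : (∃ x, x ∉ A ∧ G u x ∧ ¬ G v x) ∨ (∃ x, x ∉ A ∧ G x u ∧ ¬ G x v)
  · rcases hcase with ⟨x, hxA, hux, hnvx⟩ | ⟨x, hxA, hxu, hnxv⟩
    · have hxmem : x ∈ Sp := ⟨hxA, u, Or.inl rfl, hux⟩
      have hxnot : x ∉ P \ {u} := fun h => hnvx h.1
      have : insert x (P \ {u}) ⊆ Sp := Set.insert_subset hxmem hsubp
      have hins : (insert x (P \ {u})).ncard = (P \ {u}).ncard + 1 :=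
        Set.ncard_insert_of_notMem hxnot (Set.toFinite _)
      have h1 : P.ncard ≤ Sp.ncard := by
        have := Set.ncard_le_ncard this (Set.toFinite _)
        omega
      omega
    · have hxmem : x ∈ Sm := ⟨hxA, u, Or.inl rfl, hxu⟩
      have hxnot : x ∉ Q \ {u} := fun h => hnxv h.1
      have : insert x (Q \ {u}) ⊆ Sm := Set.insert_subset hxmem hsubm
      have hins : (insert x (Q \ {u})).ncard = (Q \ {u}).ncard + 1 :=
        Set.ncard_insert_of_notMem hxnot (Set.toFinite _)
      have h1 : Q.ncard ≤ Sm.ncard := by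
        have := Set.ncard_le_ncard this (Set.toFinite _)
        omega
      omega
  · push_neg at hcase
    exfalso
    apply hu
    refine aux_del G hirr hsc u v hvu ?_ ?_
    · intro x hxu hxv hux
      exact hcase.1 x (by rintro (rfl | rfl) <;> [exact hxu rfl; exact hxv rfl]) hux
    · intro x hxu hxv hxu'
      exact hcase.2 x (by rintro (rfl | rfl) <;> [exact hxu rfl; exact hxv rfl]) hxu'
end

section
/- Let D be a vertex-critical strongly connected simple digraph on n vertices, C a 2-cycle in D (a double arc {u,v}) with {u,v} ≠ V(D), and J = D/{u,v}. Then |E(D)| − |E(J)| ≤ n − 2. -/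
open Relation

section Machinery
variable {V : Type*}


/-- deleted-vertex relation on the ambient type -/
def Rdel (G : V → V → Prop) (z : V) : V → V → Prop :=
  fun a b => G a b ∧ a ≠ z ∧ b ≠ z

/-- n-step reachability, counted from the tail -/
def reachN (R : V → V → Prop) : ℕ → V → V → Prop
  | 0, a, b => a = b
  | n+1, a, b => ∃ c, reachN R n a c ∧ R c b

lemma reachN_of_rtg {R : V → V → Prop} {a b : V} (h : ReflTransGen R a b) :
    ∃ n, reachN R n a b := by
  induction h with
  | refl => exact ⟨0, rfl⟩
  | tail _ hbc ih => obtain ⟨n, hn⟩ := ih; exact ⟨n+1, _, hn, hbc⟩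

lemma rtg_of_reachN {R : V → V → Prop} : ∀ {n : ℕ} {a b : V}, reachN R n a b →
    ReflTransGen R a b := by
  intro n
  induction n with
  | zero => intro a b h; exact h ▸ .refl
  | succ n ih => rintro a b ⟨c, hc, hcb⟩; exact (ih hc).tail hcb

/-- the "unreachable from b after deleting x" fragment -/
def Pset (G : V → V → Prop) (x b : V) : Set V :=
  {z | z ≠ x ∧ ¬ ReflTransGen (Rdel G x) b z}

lemma x_not_mem_Pset {G : V → V → Prop} {x b : V} : x ∉ Pset G x b :=
  fun h => h.1 rfl

lemma base_not_mem_Pset {G : V → V → Prop} {x b : V} : b ∉ Pset G x b :=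
  fun h => h.2 .refl

lemma not_mem_Pset_of_edge {G : V → V → Prop} {x b z : V}
    (hb : b ≠ x) (hz : z ≠ x) (h : G b z) : z ∉ Pset G x b :=
  fun hz' => hz'.2 (ReflTransGen.single ⟨h, hb, hz⟩)

/-- in-closure of the fragment: predecessors of fragment members
are in the fragment or equal to the pin. -/
lemma Pset_in_closure {G : V → V → Prop} {x b z w : V}
    (hz : z ∈ Pset G x b) (hw : G w z) (hwx : w ≠ x) : w ∈ Pset G x b := by
  refine ⟨hwx, fun hr => hz.2 (hr.tail ⟨hw, hwx, hz.1⟩)⟩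

/-- paths that start outside an "in-closed at x" fragment never enter it -/
lemma noenter {G : V → V → Prop} {x b a c : V}
    (h : ReflTransGen (Rdel G x) a c) (ha : a ∉ Pset G x b) :
    ReflTransGen (fun p q => Rdel G x p q ∧ p ∉ Pset G x b ∧ q ∉ Pset G x b) a c
    ∧ c ∉ Pset G x b := by
  induction h with
  | refl => exact ⟨.refl, ha⟩
  | tail hab hbc ih =>
    have hbP := ih.2
    have hcP : _ ∉ Pset G x b := fun hc => ih.2 (Pset_in_closure hc hbc.1 hbc.2.1)
    exact ⟨ih.1.tail ⟨hbc, hbP, hcP⟩, hcP⟩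

/-- no path from outside can enter a fully in-closed set -/
lemma no_reach_into_closed {G : V → V → Prop} {S : Set V}
    (hcl : ∀ z ∈ S, ∀ w, G w z → w ∈ S) {a c : V}
    (h : ReflTransGen G a c) (ha : a ∉ S) : c ∉ S := by
  induction h with
  | refl => exact ha
  | tail _ hbc ih => exact fun hc => ih (hcl _ hc _ hbc)

/-- staying-inside-the-fragment relation, entered from the pin x -/
def RelP (G : V → V → Prop) (x b : V) : V → V → Prop :=
  fun a c => G a c ∧ c ∈ Pset G x b ∧ (a ∈ Pset G x b ∨ a = x)

/-- every fragment vertex is reachable from the pin within the fragment -/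
lemma relP_reach_all {G : V → V → Prop} {x b : V}
    (hst : ∀ a b' : V, ReflTransGen G a b') :
    ∀ p ∈ Pset G x b, ReflTransGen (RelP G x b) x p := by
  have key : ∀ n, ∀ p ∈ Pset G x b, reachN G n x p → ReflTransGen (RelP G x b) x p := by
    intro n
    induction n with
    | zero => intro p hp h; exact absurd (h ▸ hp) x_not_mem_Pset
    | succ n ih =>
      rintro p hp ⟨c, hc, hcp⟩
      by_cases hcx : c = x
      · exact ReflTransGen.single ⟨hcx ▸ hcp, hp, Or.inr rfl⟩
      · have hcP : c ∈ Pset G x b := Pset_in_closure hp hcp hcx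
        exact (ih c hcP hc).tail ⟨hcp, hp, Or.inl hcP⟩
  intro p hp
  obtain ⟨n, hn⟩ := reachN_of_rtg (hst x p)
  exact key n p hp hn

/-- flip of a relation -/
def flipR (G : V → V → Prop) : V → V → Prop := fun a b => G b a

lemma rtg_flip {G : V → V → Prop} {a b : V} :
    ReflTransGen (flipR G) a b ↔ ReflTransGen G b a := by
  constructor
  · intro h; induction h with
    | refl => exact .refl
    | tail _ hbc ih => exact ReflTransGen.head hbc ih
  · intro h; induction h with
    | refl => exact .refl
    | tail _ hbc ih => exact ReflTransGen.head hbc ih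

lemma Rdel_flip (G : V → V → Prop) (z : V) :
    Rdel (flipR G) z = flipR (Rdel G z) := by
  funext a b; unfold Rdel flipR; simp [and_comm, and_left_comm]

/-- the dual fragment: cannot reach b after deleting x -/
def Qset (G : V → V → Prop) (x b : V) : Set V := Pset (flipR G) x b

lemma mem_Qset_iff {G : V → V → Prop} {x b z : V} :
    z ∈ Qset G x b ↔ z ≠ x ∧ ¬ ReflTransGen (Rdel G x) z b := by
  unfold Qset Pset
  rw [Set.mem_setOf_eq, Rdel_flip]
  constructor
  · rintro ⟨h1, h2⟩; exact ⟨h1, fun hr => h2 (rtg_flip.mpr hr)⟩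
  · rintro ⟨h1, h2⟩; exact ⟨h1, fun hr => h2 (rtg_flip.mp hr)⟩

/-- lift an ambient deleted path to the subtype graph -/
lemma lift_rtg {G : V → V → Prop} {z : V} {a c : V}
    (h : ReflTransGen (Rdel G z) a c) :
    ∀ (ha : a ≠ z) (hc : c ≠ z),
      ReflTransGen (DelVert G z) (⟨a, ha⟩ : {x : V // x ≠ z}) ⟨c, hc⟩ := by
  induction h with
  | refl => intro ha hc; exact .refl
  | tail _ hbc ih =>
    intro ha hc
    exact (ih ha hbc.2.1).tail hbc.1

/-- build strong connectivity of the deleted graph from ambient data -/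
lemma sc_del_of_ambient {G : V → V → Prop} {z : V}
    (h2 : ∀ a c : V, a ≠ z → c ≠ z → ReflTransGen (Rdel G z) a c) :
    StronglyConnected (DelVert G z) := by
  intro a c
  have := lift_rtg (h2 a.1 c.1 a.2 c.2) a.2 c.2
  simpa using this

lemma base_not_mem_Qset {G : V → V → Prop} {x b : V} : b ∉ Qset G x b :=
  fun h => (mem_Qset_iff.mp h).2 .refl


/-- The CC3 surgery: if the fragment P at pin x is nonempty, everything in P
sends to both u and v, and everything in Q is dominated by both, then deleting
a suitable vertex of P keeps the digraph strongly connected -- contradiction. -/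
lemma cc3P [Fintype V] {G : V → V → Prop} {u v x b : V}
    (hst : ∀ a c : V, ReflTransGen G a c)
    (hncrit : ∀ z : V, ¬ StronglyConnected (DelVert G z))
    (hbnex : b ≠ x) (hbx : G b x) (hxb : G x b) (hbuv : b = u ∨ b = v)
    (hPB : ∀ p ∈ Pset G x b, G p u ∧ G p v)
    (hQA : ∀ q ∈ Qset G x b, G u q ∧ G v q)
    (hPne : (Pset G x b).Nonempty) : False := by
  classical
  set P := Pset G x b with hPdef
  set Q := Qset G x b with hQdef
  -- membership helpers
  have hxP : x ∉ P := x_not_mem_Pset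
  have hbP : b ∉ P := base_not_mem_Pset
  have hbQ : b ∉ Q := base_not_mem_Qset
  have heb : ∀ z, (G z u ∧ G z v) → G z b := fun z hz => hbuv.elim (· ▸ hz.1) (· ▸ hz.2)
  have heb' : ∀ z, (G u z ∧ G v z) → G b z := fun z hz => hbuv.elim (· ▸ hz.1) (· ▸ hz.2)
  have hQP : ∀ z ∈ Q, z ∉ P := by
    intro z hzQ
    exact not_mem_Pset_of_edge hbnex (mem_Qset_iff.mp hzQ).1 (heb' z (hQA z hzQ))
  -- distances within P
  set R := RelP G x b with hRdef
  have hreach : ∀ p ∈ P, ReflTransGen R x p := relP_reach_all hst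
  have hNE : ∀ p ∈ P, {n | reachN R n x p}.Nonempty := fun p hp => reachN_of_rtg (hreach p hp)
  set d : V → ℕ := fun p => sInf {n | reachN R n x p} with hddef
  obtain ⟨p₀, hp₀P, hp₀max⟩ :=
    (Set.toFinite P).toFinset.exists_max_image d
      (((Set.toFinite P).toFinset_nonempty).mpr hPne)
  rw [Set.Finite.mem_toFinset] at hp₀P
  have hp₀max' : ∀ p ∈ P, d p ≤ d p₀ := by
    intro p hp; exact hp₀max p ((Set.Finite.mem_toFinset _).mpr hp)
  have hxp₀ : x ≠ p₀ := fun h => hxP (h ▸ hp₀P)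
  have hbp₀ : b ≠ p₀ := fun h => hbP (h ▸ hp₀P)
  -- AVOID: reach every other element of P from x avoiding p₀
  have avoid : ∀ n, ∀ p ∈ P, p ≠ p₀ → d p = n →
      ReflTransGen (fun a c => R a c ∧ a ≠ p₀ ∧ c ≠ p₀) x p := by
    intro n
    induction n using Nat.strong_induction_on with
    | _ n ih =>
      intro p hp hpne hdp
      have hmem : reachN R (d p) x p := Nat.sInf_mem (hNE p hp)
      rw [hdp] at hmem
      cases n with
      | zero =>
        have hxp : x = p := hmem
        exact absurd (hxp ▸ hxP) (fun h => h hp)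
      | succ m =>
        obtain ⟨c, hc, hcp⟩ := hmem
        have hcp' : G c p ∧ p ∈ Pset G x b ∧ (c ∈ Pset G x b ∨ c = x) := hcp
        rcases hcp'.2.2 with hcP | hcx
        · have hdc : d c ≤ m := Nat.sInf_le hc
          have hcne : c ≠ p₀ := by
            intro h
            have h1 : d p ≤ d p₀ := hp₀max' p hp
            rw [← h] at h1
            omega
          exact (ih (d c) (by omega) c hcP hcne rfl).tail ⟨hcp, hcne, hpne⟩
        · exact ReflTransGen.single ⟨hcx ▸ hcp, hxp₀, hpne⟩
  -- the Q-side traversal relation (vertices of Q reach x inside Q)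
  have hreachQ : ∀ q ∈ Q, ReflTransGen (fun a c => G a c ∧ a ∈ Q ∧ (c ∈ Q ∨ c = x)) q x := by
    intro q hq
    have hst' : ∀ a c : V, ReflTransGen (flipR G) a c := fun a c => rtg_flip.mpr (hst c a)
    have := relP_reach_all (G := flipR G) (x := x) (b := b) hst' q hq
    have h2 : ReflTransGen (flipR (RelP (flipR G) x b)) q x := rtg_flip.mpr this
    refine ReflTransGen.mono ?_ _ _ h2
    rintro a c ⟨h1, h2', h3⟩
    exact ⟨h1, h2', h3.imp id id⟩
  -- main connectivity claim for D - p₀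
  have main : ∀ z, z ≠ p₀ → ReflTransGen (Rdel G p₀) b z ∧ ReflTransGen (Rdel G p₀) z b := by
    intro z hz
    by_cases hzx : z = x
    · subst hzx
      exact ⟨ReflTransGen.single ⟨hbx, hbp₀, hz⟩, ReflTransGen.single ⟨hxb, hz, hbp₀⟩⟩
    by_cases hzP : z ∈ P
    · constructor
      · have hpath := avoid (d z) z hzP hz rfl
        have : ReflTransGen (Rdel G p₀) x z := ReflTransGen.mono (by rintro a c ⟨⟨h1,_,_⟩, h4, h5⟩; exact ⟨h1, h4, h5⟩) _ _ hpath
        exact (ReflTransGen.single ⟨hbx, hbp₀, hxp₀⟩).trans this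
      · exact ReflTransGen.single ⟨heb z (hPB z hzP), hz, hbp₀⟩
    by_cases hzQ : z ∈ Q
    · constructor
      · exact ReflTransGen.single ⟨heb' z (hQA z hzQ), hbp₀, hz⟩
      · have hpath := hreachQ z hzQ
        have : ReflTransGen (Rdel G p₀) z x := by
          refine ReflTransGen.mono ?_ _ _ hpath
          rintro a c ⟨h1, h2, h3⟩
          refine ⟨h1, fun h => hQP a h2 (h ▸ hp₀P), ?_⟩
          rcases h3 with h3 | h3
          · exact fun h => hQP c h3 (h ▸ hp₀P)
          · exact h3 ▸ hxp₀
        exact this.tail ⟨hxb, hxp₀, hbp₀⟩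
    · -- z outside P, Q, not x
      have hz1 : ReflTransGen (Rdel G x) b z := by
        by_contra hcon
        exact hzP ⟨hzx, hcon⟩
      have hz2 : ReflTransGen (Rdel G x) z b := by
        by_contra hcon
        exact hzQ (mem_Qset_iff.mpr ⟨hzx, hcon⟩)
      constructor
      · exact (fun h => ReflTransGen.mono h _ _ (noenter (b := b) hz1 hbP).1)
          (by rintro a c ⟨⟨h1,_,_⟩, h4, h5⟩
              exact ⟨h1, fun h => h4 (h ▸ hp₀P), fun h => h5 (h ▸ hp₀P)⟩)
      · exact (fun h => ReflTransGen.mono h _ _ (noenter (b := b) hz2 hzP).1)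
          (by rintro a c ⟨⟨h1,_,_⟩, h4, h5⟩
              exact ⟨h1, fun h => h4 (h ▸ hp₀P), fun h => h5 (h ▸ hp₀P)⟩)
  exact hncrit p₀ (sc_del_of_ambient fun a c ha hc => ((main a ha).2).trans (main c hc).1)

lemma sc_flip {W : Type*} {R : W → W → Prop} (h : StronglyConnected (fun a b => R b a)) :
    StronglyConnected R := fun a b => rtg_flip.mp (h b a)

/-- a pin: one of u, v, or a vertex double-linked to both -/
def PinP (G : V → V → Prop) (u v x : V) : Prop :=
  x = u ∨ x = v ∨ (G u x ∧ G v x ∧ G x u ∧ G x v)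

/-- the base vertex for a pin -/
noncomputable def pinB (u v x : V) : V := by
  classical exact if x = u then v else u

lemma pin_flip {G : V → V → Prop} {u v x : V} (h : PinP G u v x) :
    PinP (flipR G) u v x := by
  rcases h with h | h | ⟨h1, h2, h3, h4⟩
  · exact Or.inl h
  · exact Or.inr (Or.inl h)
  · exact Or.inr (Or.inr ⟨h3, h4, h1, h2⟩)

section PinFacts
variable {G : V → V → Prop} {u v : V}
  (huv : G u v) (hvu : G v u) (hirr : Irreflexive G)

include huv hirr in
lemma uv_ne : u ≠ v := fun h => hirr u (h ▸ huv)

include huv hvu hirr in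
lemma pin_edges {x : V} (hx : PinP G u v x) :
    G (pinB u v x) x ∧ G x (pinB u v x) ∧ pinB u v x ≠ x ∧
      (pinB u v x = u ∨ pinB u v x = v) := by
  have hne := uv_ne huv hirr
  rcases hx with h | h | ⟨h1, h2, h3, h4⟩
  · have hpb : pinB u v x = v := by simp [pinB, h]
    rw [hpb, h]
    exact ⟨hvu, huv, fun hh => hne hh.symm, Or.inr rfl⟩
  · have hxu : ¬ (x = u) := fun hh => hne (hh ▸ h)
    have hpb : pinB u v x = u := by simp [pinB, hxu]
    rw [hpb, h]
    exact ⟨huv, hvu, hne, Or.inl rfl⟩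
  · have hxu : ¬ (x = u) := fun h => hirr u (h ▸ h3)
    have hpb : pinB u v x = u := by simp [pinB, hxu]
    rw [hpb]
    exact ⟨h1, h3, fun h => hirr x (h ▸ h1), Or.inl rfl⟩

include huv hvu hirr in
/-- pins are never inside fragments of (other) pins -/
lemma pin_not_mem_Pset {x y : V} (hx : PinP G u v x) (hy : PinP G u v y) :
    x ∉ Pset G y (pinB u v y) := by
  obtain ⟨hb1, hb2, hb3, hb4⟩ := pin_edges huv hvu hirr hy
  by_cases hxy : x = y
  · exact hxy ▸ x_not_mem_Pset
  by_cases hxb : x = pinB u v y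
  · exact hxb ▸ base_not_mem_Pset
  -- otherwise there is a direct edge from the base to x
  have hedge : G (pinB u v y) x := by
    rcases hx with h | h | ⟨h1, h2, h3, h4⟩
    · rcases hb4 with hb | hb
      · exact absurd (h.trans hb.symm) hxb
      · rw [hb, h]; exact hvu
    · rcases hb4 with hb | hb
      · rw [hb, h]; exact huv
      · exact absurd (h.trans hb.symm) hxb
    · rcases hb4 with hb | hb
      · rw [hb]; exact h1
      · rw [hb]; exact h2
  exact not_mem_Pset_of_edge hb3 hxy hedge

include huv hvu hirr in
lemma pin_not_mem_Qset {x y : V} (hx : PinP G u v x) (hy : PinP G u v y) :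
    x ∉ Qset G y (pinB u v y) := by
  have := pin_not_mem_Pset (G := flipR G) hvu huv
    (fun a h => hirr a h) (pin_flip hx) (pin_flip hy)
  exact this

include huv hvu hirr in
/-- members of any pin fragment avoid u, v and all common out-neighbours of u,v -/
lemma Pset_avoid {x z : V} (hx : PinP G u v x)
    (hz : z ∈ Pset G x (pinB u v x)) : z ≠ u ∧ z ≠ v ∧ ¬ (G u z ∧ G v z) := by
  obtain ⟨hb1, hb2, hb3, hb4⟩ := pin_edges huv hvu hirr hx
  have hzu : z ≠ u := by
    rintro rfl
    exact pin_not_mem_Pset huv hvu hirr (Or.inl rfl) hx hz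
  have hzv : z ≠ v := by
    rintro rfl
    exact pin_not_mem_Pset huv hvu hirr (Or.inr (Or.inl rfl)) hx hz
  refine ⟨hzu, hzv, fun hA => ?_⟩
  have hedge : G (pinB u v x) z := by
    rcases hb4 with hb | hb
    · rw [hb]; exact hA.1
    · rw [hb]; exact hA.2
  exact not_mem_Pset_of_edge hb3 hz.1 hedge hz

include huv hvu hirr in
lemma Qset_avoid {x z : V} (hx : PinP G u v x)
    (hz : z ∈ Qset G x (pinB u v x)) : z ≠ u ∧ z ≠ v ∧ ¬ (G z u ∧ G z v) := by
  exact Pset_avoid (G := flipR G) hvu huv (fun a h => hirr a h) (pin_flip hx) hz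

end PinFacts
/-- CC3: every pin's fragment pair contains an "empty" vertex -/
lemma cc3_exists [Fintype V] {G : V → V → Prop} {u v : V}
    (hst : ∀ a c : V, ReflTransGen G a c)
    (hncrit : ∀ z : V, ¬ StronglyConnected (DelVert G z))
    (hirr : Irreflexive G) (huv : G u v) (hvu : G v u)
    {x : V} (hx : PinP G u v x) :
    ∃ ε, (ε ∈ Pset G x (pinB u v x) ∨ ε ∈ Qset G x (pinB u v x)) ∧
      ε ≠ u ∧ ε ≠ v ∧ ¬ (G u ε ∧ G v ε) ∧ ¬ (G ε u ∧ G ε v) := by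
  classical
  obtain ⟨hb1, hb2, hb3, hb4⟩ := pin_edges huv hvu hirr hx
  set b := pinB u v x with hbdef
  by_contra hcon
  have hnone : ∀ ε, (ε ∈ Pset G x b ∨ ε ∈ Qset G x b) →
      ε = u ∨ ε = v ∨ (G u ε ∧ G v ε) ∨ (G ε u ∧ G ε v) := by
    intro ε hmem
    by_contra h2
    push_neg at h2
    exact hcon ⟨ε, hmem, h2.1, h2.2.1, fun hl => h2.2.2.1 hl.1 hl.2,
      fun hl => h2.2.2.2 hl.1 hl.2⟩
  have hPB : ∀ p ∈ Pset G x b, G p u ∧ G p v := by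
    intro p hp
    obtain ⟨h1, h2, h3⟩ := Pset_avoid huv hvu hirr hx hp
    rcases hnone p (Or.inl hp) with h | h | h | h
    · exact absurd h h1
    · exact absurd h h2
    · exact absurd h h3
    · exact h
  have hQA : ∀ q ∈ Qset G x b, G u q ∧ G v q := by
    intro q hq
    obtain ⟨h1, h2, h3⟩ := Qset_avoid huv hvu hirr hx hq
    rcases hnone q (Or.inr hq) with h | h | h | h
    · exact absurd h h1
    · exact absurd h h2
    · exact h
    · exact absurd h h3
  have hPQ : (Pset G x b).Nonempty ∨ (Qset G x b).Nonempty := by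
    by_contra hem
    push_neg at hem
    obtain ⟨hP, hQ⟩ := hem
    have hall : ∀ z, z ≠ x →
        ReflTransGen (Rdel G x) b z ∧ ReflTransGen (Rdel G x) z b := by
      intro z hz
      constructor
      · by_contra hcon2
        exact (Set.eq_empty_iff_forall_notMem.mp hP z) ⟨hz, hcon2⟩
      · by_contra hcon2
        exact (Set.eq_empty_iff_forall_notMem.mp hQ z) (mem_Qset_iff.mpr ⟨hz, hcon2⟩)
    exact hncrit x (sc_del_of_ambient fun a c ha hc => ((hall a ha).2).trans (hall c hc).1)
  rcases hPQ with hPne | hQne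
  · exact cc3P hst hncrit hb3 hb1 hb2 hb4 hPB hQA hPne
  · refine cc3P (G := flipR G) (u := u) (v := v) (x := x) (b := b)
      (fun a c => rtg_flip.mpr (hst c a))
      (fun z hsc => hncrit z (sc_flip hsc))
      hb3 hb2 hb1 hb4 ?_ ?_ hQne
    · exact fun p hp => ⟨(hQA p hp).1, (hQA p hp).2⟩
    · exact fun q hq => ⟨(hPB q hq).1, (hPB q hq).2⟩

lemma rtg_avoid_of_no_out {R : V → V → Prop} {e x p : V}
    (hno : ∀ q, ¬ R e q) (h : ReflTransGen R x p) (hp : p ≠ e) :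
    ReflTransGen (fun a c => R a c ∧ a ≠ e ∧ c ≠ e) x p := by
  revert hp
  induction h with
  | refl => intro _; exact .refl
  | @tail b' c' hab hbc ih =>
    intro hp
    have hb : b' ≠ e := fun h => hno c' (h ▸ hbc)
    exact (ih hb).tail ⟨hbc, hb, hp⟩

lemma cc4_forward [Fintype V] {G : V → V → Prop} {u v x y ε : V}
    (hst : ∀ a c : V, ReflTransGen G a c)
    (hirr : Irreflexive G) (huv : G u v) (hvu : G v u)
    (hx : PinP G u v x) (hy : PinP G u v y)
    (hεP : ε ∈ Pset G x (pinB u v x)) (hεQ : ε ∈ Qset G y (pinB u v y))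
    (hsing : ∀ z, z ∈ Pset G x (pinB u v x) → z ∈ Qset G y (pinB u v y) → z = ε) :
    ∀ z, z ≠ ε → ReflTransGen (Rdel G ε) u z := by
  classical
  obtain ⟨hbx1, hbx2, hbx3, hbx4⟩ := pin_edges huv hvu hirr hx
  obtain ⟨hby1, hby2, hby3, hby4⟩ := pin_edges huv hvu hirr hy
  obtain ⟨hεu, hεv, _⟩ := Pset_avoid huv hvu hirr hx hεP
  have hεx : ε ≠ x := hεP.1
  have hεy : ε ≠ y := (mem_Qset_iff.mp hεQ).1
  have hεQ' := mem_Qset_iff.mp hεQ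
  -- reach the base of x from u, avoiding ε
  have hub : ReflTransGen (Rdel G ε) u (pinB u v x) := by
    rcases hbx4 with hb | hb
    · rw [hb]
    · rw [hb]; exact ReflTransGen.single ⟨huv, Ne.symm hεu, Ne.symm hεv⟩
  -- reach x from u avoiding ε
  have hux : ReflTransGen (Rdel G ε) u x := by
    rcases hx with h | h | ⟨h1, h2, h3, h4⟩
    · rw [h]
    · rw [h]; exact ReflTransGen.single ⟨huv, Ne.symm hεu, Ne.symm hεv⟩
    · exact ReflTransGen.single ⟨h1, Ne.symm hεu, Ne.symm hεx⟩
  -- ε has no RelP-successors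
  have hNoOut : ∀ p, ¬ RelP G x (pinB u v x) ε p := by
    rintro p ⟨hep, hpPx, -⟩
    have hpy : p = y ∨ p ∈ Qset G y (pinB u v y) := by
      by_cases h1 : p = y
      · exact Or.inl h1
      by_cases h2 : p ∈ Qset G y (pinB u v y)
      · exact Or.inr h2
      exfalso
      have hreach : ReflTransGen (Rdel G y) p (pinB u v y) := by
        by_contra hcon
        exact h2 (mem_Qset_iff.mpr ⟨h1, hcon⟩)
      exact hεQ'.2 (ReflTransGen.head ⟨hep, hεy, h1⟩ hreach)
    rcases hpy with h | h
    · exact pin_not_mem_Pset huv hvu hirr hy hx (h ▸ hpPx)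
    · exact hirr ε ((hsing p hpPx h) ▸ hep)
  intro z hz
  by_cases hzPx : z ∈ Pset G x (pinB u v x)
  · have hpath := relP_reach_all hst z hzPx
    have havoid := rtg_avoid_of_no_out hNoOut hpath hz
    refine hux.trans (ReflTransGen.mono ?_ _ _ havoid)
    rintro a c ⟨⟨h1, _, _⟩, h4, h5⟩
    exact ⟨h1, h4, h5⟩
  · by_cases hzx : z = x
    · exact hzx ▸ hux
    have hRz : ReflTransGen (Rdel G x) (pinB u v x) z := by
      by_contra hcon
      exact hzPx ⟨hzx, hcon⟩
    refine hub.trans (ReflTransGen.mono ?_ _ _ ((noenter hRz base_not_mem_Pset).1))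
    rintro a c ⟨⟨h1, _, _⟩, h4, h5⟩
    exact ⟨h1, fun h => h4 (h ▸ hεP), fun h => h5 (h ▸ hεP)⟩

lemma cc4 [Fintype V] {G : V → V → Prop} {u v x y ε : V}
    (hst : ∀ a c : V, ReflTransGen G a c)
    (hncrit : ∀ z : V, ¬ StronglyConnected (DelVert G z))
    (hirr : Irreflexive G) (huv : G u v) (hvu : G v u)
    (hx : PinP G u v x) (hy : PinP G u v y)
    (hεP : ε ∈ Pset G x (pinB u v x)) (hεQ : ε ∈ Qset G y (pinB u v y))
    (hsing : ∀ z, z ∈ Pset G x (pinB u v x) → z ∈ Qset G y (pinB u v y) → z = ε) :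
    False := by
  have forward := cc4_forward hst hirr huv hvu hx hy hεP hεQ hsing
  have backward : ∀ z, z ≠ ε → ReflTransGen (Rdel G ε) z u := by
    intro z hz
    have hflip := cc4_forward (G := flipR G) (u := u) (v := v) (x := y) (y := x) (ε := ε)
      (fun a c => rtg_flip.mpr (hst c a)) (fun a h => hirr a h) hvu huv
      (pin_flip hy) (pin_flip hx) hεQ hεP (fun w h1 h2 => hsing w h2 h1) z hz
    rw [Rdel_flip] at hflip
    exact rtg_flip.mp hflip
  exact hncrit ε (sc_del_of_ambient fun a c ha hc => (backward a ha).trans (forward c hc))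

/-- abstract counting: a family of nonempty finsets indexed by pins, where
same-colour members are disjoint and different-colour members intersect in at
least 2 elements (if at all), covers at least as many elements as pins. -/
lemma count_lemma [DecidableEq V] :
    ∀ (n : ℕ) (X : Finset V) (F : V → Finset V) (c : V → Prop),
      X.card = n →
      (∀ x ∈ X, (F x).Nonempty) →
      (∀ x ∈ X, ∀ y ∈ X, x ≠ y → (c x ↔ c y) → F x ∩ F y = ∅) →
      (∀ x ∈ X, ∀ y ∈ X, x ≠ y → (F x ∩ F y).Nonempty → 2 ≤ (F x ∩ F y).card) →
      X.card ≤ (X.biUnion F).card := by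
  intro n
  induction n using Nat.strong_induction_on with
  | _ n ih =>
    intro X F c hcard hne hdisj hcross
    rcases X.eq_empty_or_nonempty with rfl | ⟨x₀, hx₀⟩
    · simp
    by_cases hpriv : ∃ e ∈ F x₀, ∀ y ∈ X, y ≠ x₀ → e ∉ F y
    · obtain ⟨e, heF, hepriv⟩ := hpriv
      have hpos : 0 < n := hcard ▸ Finset.card_pos.mpr ⟨x₀, hx₀⟩
      have hc' : (X.erase x₀).card = n - 1 := by
        rw [Finset.card_erase_of_mem hx₀, hcard]
      have hIH := ih (n-1) (by omega) (X.erase x₀) F c hc'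
        (fun x hx => hne x (Finset.mem_of_mem_erase hx))
        (fun x hx y hy => hdisj x (Finset.mem_of_mem_erase hx) y (Finset.mem_of_mem_erase hy))
        (fun x hx y hy => hcross x (Finset.mem_of_mem_erase hx) y (Finset.mem_of_mem_erase hy))
      have hout : e ∉ (X.erase x₀).biUnion F := by
        intro hmem
        obtain ⟨y, hyX, heFy⟩ := Finset.mem_biUnion.mp hmem
        exact hepriv y (Finset.mem_of_mem_erase hyX) (Finset.ne_of_mem_erase hyX) heFy
      have hsub : insert e ((X.erase x₀).biUnion F) ⊆ X.biUnion F := by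
        intro z hz
        rcases Finset.mem_insert.mp hz with rfl | hz
        · exact Finset.mem_biUnion.mpr ⟨x₀, hx₀, heF⟩
        · obtain ⟨y, hyX, hzy⟩ := Finset.mem_biUnion.mp hz
          exact Finset.mem_biUnion.mpr ⟨y, Finset.mem_of_mem_erase hyX, hzy⟩
      calc X.card = (X.erase x₀).card + 1 := by rw [hc', hcard]; omega
        _ ≤ ((X.erase x₀).biUnion F).card + 1 := by omega
        _ = (insert e ((X.erase x₀).biUnion F)).card := (Finset.card_insert_of_notMem hout).symm
        _ ≤ (X.biUnion F).card := Finset.card_le_card hsub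
    · push_neg at hpriv
      obtain ⟨e₀, he₀⟩ := hne x₀ hx₀
      obtain ⟨y₀, hy₀X, hy₀ne, he₀y⟩ := hpriv e₀ he₀
      have hxy : x₀ ≠ y₀ := Ne.symm hy₀ne
      have hinter : (F x₀ ∩ F y₀).Nonempty := ⟨e₀, Finset.mem_inter.mpr ⟨he₀, he₀y⟩⟩
      have hccol : ¬ (c x₀ ↔ c y₀) := by
        intro hcol
        rw [hdisj x₀ hx₀ y₀ hy₀X hxy hcol] at hinter
        exact Finset.not_nonempty_empty hinter
      have h2 := hcross x₀ hx₀ y₀ hy₀X hxy hinter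
      obtain ⟨a, ha, b, hb, hab⟩ := Finset.one_lt_card.mp (lt_of_lt_of_le one_lt_two h2)
      have hax := (Finset.mem_inter.mp ha).1
      have hay := (Finset.mem_inter.mp ha).2
      have hbx := (Finset.mem_inter.mp hb).1
      have hby := (Finset.mem_inter.mp hb).2
      set X'' := (X.erase x₀).erase y₀ with hX''
      have hy₀e : y₀ ∈ X.erase x₀ := Finset.mem_erase.mpr ⟨hy₀ne, hy₀X⟩
      have hn2 : 2 ≤ n := by
        rw [← hcard]
        have : ({x₀, y₀} : Finset V) ⊆ X := by
          intro z hz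
          rcases Finset.mem_insert.mp hz with rfl | hz
          · exact hx₀
          · exact (Finset.mem_singleton.mp hz) ▸ hy₀X
        calc 2 = ({x₀, y₀} : Finset V).card := (Finset.card_pair hxy).symm
          _ ≤ X.card := Finset.card_le_card this
      have hc'' : X''.card = n - 2 := by
        rw [hX'', Finset.card_erase_of_mem hy₀e, Finset.card_erase_of_mem hx₀, hcard]
        omega
      have hmemX'' : ∀ z ∈ X'', z ∈ X ∧ z ≠ x₀ ∧ z ≠ y₀ := by
        intro z hz
        obtain ⟨hz1, hz2⟩ := Finset.mem_erase.mp hz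
        obtain ⟨hz3, hz4⟩ := Finset.mem_erase.mp hz2
        exact ⟨hz4, hz3, hz1⟩
      have hIH := ih (n-2) (by omega) X'' F c hc''
        (fun x hx => hne x (hmemX'' x hx).1)
        (fun x hx y hy => hdisj x (hmemX'' x hx).1 y (hmemX'' y hy).1)
        (fun x hx y hy => hcross x (hmemX'' x hx).1 y (hmemX'' y hy).1)
      -- a and b avoid all other family members
      have havoid : ∀ w, w ∈ F x₀ → w ∈ F y₀ → w ∉ X''.biUnion F := by
        intro w hwx hwy hmem
        obtain ⟨z, hzX, hwz⟩ := Finset.mem_biUnion.mp hmem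
        obtain ⟨hzX', hzx₀, hzy₀⟩ := hmemX'' z hzX
        by_cases hcz : c z ↔ c x₀
        · have := hdisj z hzX' x₀ hx₀ hzx₀ hcz
          exact absurd (Finset.mem_inter.mpr ⟨hwz, hwx⟩) (by rw [this]; exact Finset.notMem_empty w)
        · have hcz' : c z ↔ c y₀ := by tauto
          have := hdisj z hzX' y₀ hy₀X hzy₀ hcz'
          exact absurd (Finset.mem_inter.mpr ⟨hwz, hwy⟩) (by rw [this]; exact Finset.notMem_empty w)
      have hbout : b ∉ X''.biUnion F := havoid b hbx hby
      have haout : a ∉ insert b (X''.biUnion F) := by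
        intro h
        rcases Finset.mem_insert.mp h with h | h
        · exact hab h
        · exact havoid a hax hay h
      have hsub : insert a (insert b (X''.biUnion F)) ⊆ X.biUnion F := by
        intro z hz
        rcases Finset.mem_insert.mp hz with rfl | hz
        · exact Finset.mem_biUnion.mpr ⟨x₀, hx₀, hax⟩
        rcases Finset.mem_insert.mp hz with rfl | hz
        · exact Finset.mem_biUnion.mpr ⟨x₀, hx₀, hbx⟩
        obtain ⟨y, hyX, hzy⟩ := Finset.mem_biUnion.mp hz
        exact Finset.mem_biUnion.mpr ⟨y, (hmemX'' y hyX).1, hzy⟩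
      calc X.card = n := hcard
        _ ≤ (n - 2) + 2 := by omega
        _ ≤ (X''.biUnion F).card + 2 := by omega
        _ = (insert a (insert b (X''.biUnion F))).card := by
            rw [Finset.card_insert_of_notMem haout, Finset.card_insert_of_notMem hbout]
        _ ≤ (X.biUnion F).card := Finset.card_le_card hsub

lemma Pset_disjoint {G : V → V → Prop} {u v x y : V}
    (hst : ∀ a c : V, ReflTransGen G a c)
    (hirr : Irreflexive G) (huv : G u v) (hvu : G v u)
    (hx : PinP G u v x) (hy : PinP G u v y) (hxy : x ≠ y) :
    ∀ z, z ∈ Pset G x (pinB u v x) → z ∈ Pset G y (pinB u v y) → False := by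
  intro s hsx hsy
  set S := Pset G x (pinB u v x) ∩ Pset G y (pinB u v y) with hS
  have hcl : ∀ z ∈ S, ∀ w, G w z → w ∈ S := by
    rintro z ⟨hz1, hz2⟩ w hw
    by_cases hwx : w = x
    · exfalso
      have : w ∈ Pset G y (pinB u v y) :=
        Pset_in_closure hz2 hw (fun h => hxy (hwx ▸ h))
      exact pin_not_mem_Pset huv hvu hirr hx hy (hwx ▸ this)
    by_cases hwy : w = y
    · exfalso
      have : w ∈ Pset G x (pinB u v x) := Pset_in_closure hz1 hw hwx
      exact pin_not_mem_Pset huv hvu hirr hy hx (hwy ▸ this)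
    · exact ⟨Pset_in_closure hz1 hw hwx, Pset_in_closure hz2 hw hwy⟩
  have hu : u ∉ S := fun h => pin_not_mem_Pset huv hvu hirr (Or.inl rfl) hx h.1
  exact (no_reach_into_closed hcl (hst u s) hu) ⟨hsx, hsy⟩

lemma Qset_disjoint {G : V → V → Prop} {u v x y : V}
    (hst : ∀ a c : V, ReflTransGen G a c)
    (hirr : Irreflexive G) (huv : G u v) (hvu : G v u)
    (hx : PinP G u v x) (hy : PinP G u v y) (hxy : x ≠ y) :
    ∀ z, z ∈ Qset G x (pinB u v x) → z ∈ Qset G y (pinB u v y) → False :=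
  fun s hsx hsy =>
    Pset_disjoint (G := flipR G) (fun a c => rtg_flip.mpr (hst c a))
      (fun a h => hirr a h) hvu huv (pin_flip hx) (pin_flip hy) hxy s hsx hsy

/-- the main combinatorial bound -/
lemma main_bound [Fintype V] {G : V → V → Prop} {u v : V}
    (hst : ∀ a c : V, ReflTransGen G a c)
    (hncrit : ∀ z : V, ¬ StronglyConnected (DelVert G z))
    (hirr : Irreflexive G) (huv : G u v) (hvu : G v u) :
    {w | w ≠ u ∧ w ≠ v ∧ G u w ∧ G v w}.ncard
      + {w | w ≠ u ∧ w ≠ v ∧ G w u ∧ G w v}.ncard + 4 ≤ Fintype.card V := by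
  classical
  set A := {w | w ≠ u ∧ w ≠ v ∧ G u w ∧ G v w} with hA
  set B := {w | w ≠ u ∧ w ≠ v ∧ G w u ∧ G w v} with hB
  set E := {z | z ≠ u ∧ z ≠ v ∧ ¬(G u z ∧ G v z) ∧ ¬(G z u ∧ G z v)} with hE
  set Dd := A ∩ B with hDd
  have hne := uv_ne huv hirr
  -- the pin finset
  set X : Finset V := insert u (insert v (Set.toFinite Dd).toFinset) with hX
  have hpin : ∀ x ∈ X, PinP G u v x := by
    intro x hx
    rcases Finset.mem_insert.mp hx with rfl | hx
    · exact Or.inl rfl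
    rcases Finset.mem_insert.mp hx with rfl | hx
    · exact Or.inr (Or.inl rfl)
    · obtain ⟨hxA, hxB⟩ := (Set.Finite.mem_toFinset _).mp hx
      exact Or.inr (Or.inr ⟨hxA.2.2.1, hxA.2.2.2, hxB.2.2.1, hxB.2.2.2⟩)
  set c : V → Prop := fun x => (Pset G x (pinB u v x) ∩ E).Nonempty with hc
  set F : V → Finset V := fun x => (Set.toFinite
      ((if c x then Pset G x (pinB u v x) else Qset G x (pinB u v x)) ∩ E)).toFinset with hF
  have hFmem : ∀ x z, z ∈ F x ↔
      (z ∈ (if c x then Pset G x (pinB u v x) else Qset G x (pinB u v x)) ∧ z ∈ E) := by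
    intro x z
    rw [hF, Set.Finite.mem_toFinset]
    exact Iff.rfl
  -- nonemptiness
  have hFne : ∀ x ∈ X, (F x).Nonempty := by
    intro x hx
    obtain ⟨ε, hmem, h1, h2, h3, h4⟩ := cc3_exists hst hncrit hirr huv hvu (hpin x hx)
    have hεE : ε ∈ E := ⟨h1, h2, h3, h4⟩
    by_cases hcx : c x
    · have hcx' := hcx
      obtain ⟨w, hw⟩ := hcx'
      exact ⟨w, (hFmem x w).mpr ⟨by rw [if_pos hcx]; exact hw.1, hw.2⟩⟩
    · rcases hmem with hmem | hmem
      · exact absurd ⟨ε, hmem, hεE⟩ hcx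
      · exact ⟨ε, (hFmem x ε).mpr ⟨by rw [if_neg hcx]; exact hmem, hεE⟩⟩
  -- same-colour disjointness
  have hdisj : ∀ x ∈ X, ∀ y ∈ X, x ≠ y → (c x ↔ c y) → F x ∩ F y = ∅ := by
    intro x hx y hy hxy hcol
    rw [Finset.eq_empty_iff_forall_notMem]
    intro z hz
    obtain ⟨hz1, hz2⟩ := Finset.mem_inter.mp hz
    obtain ⟨hz1', hz1E⟩ := (hFmem x z).mp hz1
    obtain ⟨hz2', _⟩ := (hFmem y z).mp hz2
    by_cases hcx : c x
    · rw [if_pos hcx] at hz1'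
      rw [if_pos (hcol.mp hcx)] at hz2'
      exact Pset_disjoint hst hirr huv hvu (hpin x hx) (hpin y hy) hxy z hz1' hz2'
    · rw [if_neg hcx] at hz1'
      rw [if_neg (fun h => hcx (hcol.mpr h))] at hz2'
      exact Qset_disjoint hst hirr huv hvu (hpin x hx) (hpin y hy) hxy z hz1' hz2'
  -- cross intersections have at least 2 elements
  have hPQsub : ∀ x ∈ X, ∀ y ∈ X, ∀ z, z ∈ Pset G x (pinB u v x) →
      z ∈ Qset G y (pinB u v y) → z ∈ E := by
    intro x hx y hy z hzP hzQ
    obtain ⟨e1, e2, e3⟩ := Pset_avoid huv hvu hirr (hpin x hx) hzP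
    obtain ⟨_, _, e6⟩ := Qset_avoid huv hvu hirr (hpin y hy) hzQ
    exact ⟨e1, e2, e3, e6⟩
  have hcross : ∀ x ∈ X, ∀ y ∈ X, x ≠ y → (F x ∩ F y).Nonempty → 2 ≤ (F x ∩ F y).card := by
    intro x hx y hy hxy hinter
    by_cases hcol : c x ↔ c y
    · rw [hdisj x hx y hy hxy hcol] at hinter
      exact absurd hinter (Finset.not_nonempty_empty)
    by_contra hlt
    push_neg at hlt
    have hone : (F x ∩ F y).card ≤ 1 := by omega
    obtain ⟨ε, hε⟩ := hinter
    have hsingF : ∀ w ∈ F x ∩ F y, w = ε := by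
      intro w hw
      exact Finset.card_le_one.mp hone w hw ε hε
    by_cases hcx : c x
    · have hcy : ¬ c y := fun h => hcol ⟨fun _ => h, fun _ => hcx⟩
      have hkey : ∀ z, (z ∈ Pset G x (pinB u v x) ∧ z ∈ Qset G y (pinB u v y)) ↔ z ∈ F x ∩ F y := by
        intro z
        constructor
        · rintro ⟨h1, h2⟩
          have hzE := hPQsub x hx y hy z h1 h2
          exact Finset.mem_inter.mpr ⟨(hFmem x z).mpr ⟨by rw [if_pos hcx]; exact h1, hzE⟩,
            (hFmem y z).mpr ⟨by rw [if_neg hcy]; exact h2, hzE⟩⟩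
        · intro hz
          obtain ⟨hz1, hz2⟩ := Finset.mem_inter.mp hz
          obtain ⟨hz1', _⟩ := (hFmem x z).mp hz1
          obtain ⟨hz2', _⟩ := (hFmem y z).mp hz2
          rw [if_pos hcx] at hz1'
          rw [if_neg hcy] at hz2'
          exact ⟨hz1', hz2'⟩
      obtain ⟨hε1, hε2⟩ := (hkey ε).mpr hε
      exact cc4 hst hncrit hirr huv hvu (hpin x hx) (hpin y hy) hε1 hε2
        (fun z h1 h2 => hsingF z ((hkey z).mp ⟨h1, h2⟩))
    · have hcy : c y := by tauto
      have hkey : ∀ z, (z ∈ Pset G y (pinB u v y) ∧ z ∈ Qset G x (pinB u v x)) ↔ z ∈ F x ∩ F y := by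
        intro z
        constructor
        · rintro ⟨h1, h2⟩
          have hzE := hPQsub y hy x hx z h1 h2
          exact Finset.mem_inter.mpr ⟨(hFmem x z).mpr ⟨by rw [if_neg hcx]; exact h2, hzE⟩,
            (hFmem y z).mpr ⟨by rw [if_pos hcy]; exact h1, hzE⟩⟩
        · intro hz
          obtain ⟨hz1, hz2⟩ := Finset.mem_inter.mp hz
          obtain ⟨hz1', _⟩ := (hFmem x z).mp hz1
          obtain ⟨hz2', _⟩ := (hFmem y z).mp hz2
          rw [if_neg hcx] at hz1'
          rw [if_pos hcy] at hz2'
          exact ⟨hz2', hz1'⟩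
      obtain ⟨hε1, hε2⟩ := (hkey ε).mpr hε
      exact cc4 hst hncrit hirr huv hvu (hpin y hy) (hpin x hx) hε1 hε2
        (fun z h1 h2 => hsingF z ((hkey z).mp ⟨h1, h2⟩))
  -- apply the counting lemma
  have hcount := count_lemma X.card X F c rfl hFne hdisj hcross
  -- X.card = Dd.ncard + 2
  have huDd : u ∉ Dd := fun h => h.1.1 rfl
  have hvDd : v ∉ Dd := fun h => h.1.2.1 rfl
  have hXcard : X.card = Dd.ncard + 2 := by
    rw [hX, Finset.card_insert_of_notMem, Finset.card_insert_of_notMem]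
    · rw [Set.ncard_eq_toFinset_card Dd (Set.toFinite Dd)]
    · exact fun h => hvDd ((Set.Finite.mem_toFinset _).mp h)
    · intro h
      rcases Finset.mem_insert.mp h with h | h
      · exact hne h
      · exact huDd ((Set.Finite.mem_toFinset _).mp h)
  -- the union is inside E
  have hsubE : X.biUnion F ⊆ (Set.toFinite E).toFinset := by
    intro z hz
    obtain ⟨x, _, hzx⟩ := Finset.mem_biUnion.mp hz
    exact (Set.Finite.mem_toFinset _).mpr ((hFmem x z).mp hzx).2
  have hEcard : (X.biUnion F).card ≤ E.ncard := by
    rw [Set.ncard_eq_toFinset_card E (Set.toFinite E)]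
    exact Finset.card_le_card hsubE
  have hmain : Dd.ncard + 2 ≤ E.ncard := by
    rw [← hXcard]
    exact le_trans hcount hEcard
  -- set arithmetic
  have hWsub : A ∪ B ⊆ {z : V | z ≠ u ∧ z ≠ v} := by
    rintro z (hz | hz)
    · exact ⟨hz.1, hz.2.1⟩
    · exact ⟨hz.1, hz.2.1⟩
  have hEeq : {z : V | z ≠ u ∧ z ≠ v} \ (A ∪ B) = E := by
    ext z
    constructor
    · rintro ⟨⟨h1, h2⟩, h3⟩
      exact ⟨h1, h2, fun hcon => h3 (Or.inl ⟨h1, h2, hcon.1, hcon.2⟩),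
        fun hcon => h3 (Or.inr ⟨h1, h2, hcon.1, hcon.2⟩)⟩
    · rintro ⟨h1, h2, h3, h4⟩
      refine ⟨⟨h1, h2⟩, ?_⟩
      rintro (h | h)
      · exact h3 ⟨h.2.2.1, h.2.2.2⟩
      · exact h4 ⟨h.2.2.1, h.2.2.2⟩
  have hdiff := Set.ncard_diff_add_ncard_of_subset hWsub (Set.toFinite _)
  rw [hEeq] at hdiff
  -- |W| = card V - 2
  have hWuniv : (Set.univ : Set V) \ {u, v} = {z : V | z ≠ u ∧ z ≠ v} := by
    ext z
    simp only [Set.mem_diff, Set.mem_univ, Set.mem_insert_iff, Set.mem_singleton_iff,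
      Set.mem_setOf_eq, true_and]
    push_neg
    rfl
  have huvsub : ({u, v} : Set V) ⊆ Set.univ := Set.subset_univ _
  have hWcard := Set.ncard_diff_add_ncard_of_subset huvsub (Set.toFinite _)
  rw [hWuniv, Set.ncard_pair hne, Set.ncard_univ, Nat.card_eq_fintype_card] at hWcard
  have hunion := Set.ncard_union_add_ncard_inter A B (Set.toFinite A) (Set.toFinite B)
  rw [← hDd] at hunion
  omega

end Machinery

theorem stmt17 {V : Type*} [Fintype V] (G : V → V → Prop) (n : ℕ)
    (hn : Fintype.card V = n) (hirr : Irreflexive G) (hcrit : Critical G)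
    (u v : V) (huv : G u v) (hvu : G v u)
    (hne : ({u, v} : Set V) ≠ Set.univ) :
    edgeCount G - edgeCount (Contract G ({u, v} : Set V)) ≤ n - 2 := by
  classical
  obtain ⟨hstrong, hcrit2⟩ := hcrit
  have hneuv : u ≠ v := fun h => hirr u (h ▸ huv)
  set A := {w | w ≠ u ∧ w ≠ v ∧ G u w ∧ G v w} with hA
  set B := {w | w ≠ u ∧ w ≠ v ∧ G w u ∧ G w v} with hB
  have hbound : A.ncard + B.ncard + 4 ≤ Fintype.card V :=
    main_bound hstrong hcrit2 hirr huv hvu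
  -- edge counting
  set W2 := ({u, v} : Set V) with hW2
  have hmem2 : ∀ w : V, w ∈ W2 ↔ w = u ∨ w = v := by
    intro w; rw [hW2]; simp
  set EJ := {p : Option {x : V // x ∉ W2} × Option {x : V // x ∉ W2} |
      Contract G W2 p.1 p.2} with hEJ
  set φ : V → Option {x : V // x ∉ W2} := fun w => if h : w ∈ W2 then none else some ⟨w, h⟩
    with hφ
  have hφn : ∀ w, w ∈ W2 → φ w = none := fun w h => dif_pos h
  have hφs : ∀ w (h : w ∉ W2), φ w = some ⟨w, h⟩ := fun w h => dif_neg h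
  have hφinj : ∀ a b, φ a = φ b → (a = b ∨ (a ∈ W2 ∧ b ∈ W2)) := by
    intro a b hab
    by_cases ha : a ∈ W2
    · by_cases hb : b ∈ W2
      · exact Or.inr ⟨ha, hb⟩
      · rw [hφn a ha, hφs b hb] at hab; exact absurd hab (by simp)
    · by_cases hb : b ∈ W2
      · rw [hφs a ha, hφn b hb] at hab; exact absurd hab (by simp)
      · rw [hφs a ha, hφs b hb] at hab
        have := Option.some_injective _ hab
        exact Or.inl (congrArg Subtype.val this)
  -- decomposition of the edge set
  set S1 := {p : V × V | G p.1 p.2 ∧ ¬ ((p.1 = u ∧ p.2 = v) ∨ (p.1 = v ∧ p.2 = u)) ∧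
      ¬ (p.1 = v ∧ p.2 ∈ A) ∧ ¬ (p.2 = v ∧ p.1 ∈ B)} with hS1
  set S2 := {p : V × V | G p.1 p.2 ∧ p.1 = v ∧ p.2 ∈ A} with hS2
  set S3 := {p : V × V | G p.1 p.2 ∧ p.2 = v ∧ p.1 ∈ B} with hS3
  set S4 := {p : V × V | G p.1 p.2 ∧ ((p.1 = u ∧ p.2 = v) ∨ (p.1 = v ∧ p.2 = u))} with hS4
  have hsplit : {p : V × V | G p.1 p.2} ⊆ S1 ∪ S2 ∪ S3 ∪ S4 := by
    intro p hp
    by_cases h4 : (p.1 = u ∧ p.2 = v) ∨ (p.1 = v ∧ p.2 = u)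
    · exact Or.inr ⟨hp, h4⟩
    by_cases h2 : p.1 = v ∧ p.2 ∈ A
    · exact Or.inl (Or.inl (Or.inr ⟨hp, h2⟩))
    by_cases h3 : p.2 = v ∧ p.1 ∈ B
    · exact Or.inl (Or.inr ⟨hp, h3⟩)
    · exact Or.inl (Or.inl (Or.inl ⟨hp, h4, h2, h3⟩))
  -- bound each piece
  have hS2card : S2.ncard ≤ A.ncard := by
    refine Set.ncard_le_ncard_of_injOn (fun p => p.2) (fun p hp => hp.2.2) ?_ (Set.toFinite A)
    rintro p hp q hq hpq
    exact Prod.ext (hp.2.1.trans hq.2.1.symm) hpq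
  have hS3card : S3.ncard ≤ B.ncard := by
    refine Set.ncard_le_ncard_of_injOn (fun p => p.1) (fun p hp => hp.2.2) ?_ (Set.toFinite B)
    rintro p hp q hq hpq
    exact Prod.ext hpq (hp.2.1.trans hq.2.1.symm)
  have hS4card : S4.ncard ≤ 2 := by
    have hsub : S4 ⊆ {((u, v) : V × V), ((v, u) : V × V)} := by
      rintro p ⟨-, h | h⟩
      · exact Or.inl (Prod.ext h.1 h.2)
      · exact Or.inr (Prod.ext h.1 h.2)
    calc S4.ncard ≤ _ := Set.ncard_le_ncard hsub (Set.toFinite _)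
      _ ≤ 2 := by
          have := Set.ncard_insert_le ((u, v) : V × V) ({((v, u) : V × V)} : Set (V × V))
          simpa using this
  have hnoBoth : ∀ p ∈ S1, ¬ (p.1 ∈ W2 ∧ p.2 ∈ W2) := by
    rintro p ⟨hG, h4, -, -⟩ ⟨h1, h2⟩
    rcases (hmem2 _).mp h1 with ha | ha <;> rcases (hmem2 _).mp h2 with hb | hb
    · rw [ha, hb] at hG; exact hirr u hG
    · exact h4 (Or.inl ⟨ha, hb⟩)
    · exact h4 (Or.inr ⟨ha, hb⟩)
    · rw [ha, hb] at hG; exact hirr v hG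
  have hS1card : S1.ncard ≤ EJ.ncard := by
    refine Set.ncard_le_ncard_of_injOn (fun p => (φ p.1, φ p.2)) ?_ ?_ (Set.toFinite EJ)
    · -- maps into EJ
      rintro p hp
      obtain ⟨hG, h4, h2, h3⟩ := hp
      by_cases ha : p.1 ∈ W2
      · by_cases hb : p.2 ∈ W2
        · exact absurd ⟨ha, hb⟩ (hnoBoth p ⟨hG, h4, h2, h3⟩)
        · rw [hEJ]
          simp only [Set.mem_setOf_eq, hφn p.1 ha, hφs p.2 hb]
          exact ⟨p.1, ha, hG⟩
      · by_cases hb : p.2 ∈ W2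
        · rw [hEJ]
          simp only [Set.mem_setOf_eq, hφs p.1 ha, hφn p.2 hb]
          exact ⟨p.2, hb, hG⟩
        · rw [hEJ]
          simp only [Set.mem_setOf_eq, hφs p.1 ha, hφs p.2 hb]
          exact hG
    · -- injective on S1
      rintro p hp q hq hpq
      have hpq1 : φ p.1 = φ q.1 := congrArg Prod.fst hpq
      have hpq2 : φ p.2 = φ q.2 := congrArg Prod.snd hpq
      obtain ⟨hGp, h4p, h2p, h3p⟩ := hp
      obtain ⟨hGq, h4q, h2q, h3q⟩ := hq
      rcases hφinj _ _ hpq1 with h1 | ⟨ha1, hb1⟩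
      · rcases hφinj _ _ hpq2 with h2 | ⟨ha2, hb2⟩
        · exact Prod.ext h1 h2
        · by_cases hw : p.1 ∈ W2
          · exact absurd ⟨hw, ha2⟩ (hnoBoth p ⟨hGp, h4p, h2p, h3p⟩)
          have hne1 : p.1 ≠ u := fun h => hw ((hmem2 _).mpr (Or.inl h))
          have hne2 : p.1 ≠ v := fun h => hw ((hmem2 _).mpr (Or.inr h))
          rcases (hmem2 _).mp ha2 with hpu | hpv
          · rcases (hmem2 _).mp hb2 with hqu | hqv
            · exact Prod.ext h1 (hpu.trans hqu.symm)
            · exfalso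
              have hGp' : G p.1 u := by rw [hpu] at hGp; exact hGp
              have hGq' : G p.1 v := by rw [← h1, hqv] at hGq; exact hGq
              have hBm : p.1 ∈ B := ⟨hne1, hne2, hGp', hGq'⟩
              exact h3q ⟨hqv, h1 ▸ hBm⟩
          · rcases (hmem2 _).mp hb2 with hqu | hqv
            · exfalso
              have hGp' : G p.1 v := by rw [hpv] at hGp; exact hGp
              have hGq' : G p.1 u := by rw [← h1, hqu] at hGq; exact hGq
              have hBm : p.1 ∈ B := ⟨hne1, hne2, hGq', hGp'⟩
              exact h3p ⟨hpv, hBm⟩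
            · exact Prod.ext h1 (hpv.trans hqv.symm)
      · rcases hφinj _ _ hpq2 with h2 | ⟨ha2, hb2⟩
        · by_cases hw : p.2 ∈ W2
          · exact absurd ⟨ha1, hw⟩ (hnoBoth p ⟨hGp, h4p, h2p, h3p⟩)
          have hne1 : p.2 ≠ u := fun h => hw ((hmem2 _).mpr (Or.inl h))
          have hne2 : p.2 ≠ v := fun h => hw ((hmem2 _).mpr (Or.inr h))
          rcases (hmem2 _).mp ha1 with hpu | hpv
          · rcases (hmem2 _).mp hb1 with hqu | hqv
            · exact Prod.ext (hpu.trans hqu.symm) h2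
            · exfalso
              have hGp' : G u p.2 := by rw [hpu] at hGp; exact hGp
              have hGq' : G v p.2 := by rw [← h2, hqv] at hGq; exact hGq
              have hAm : p.2 ∈ A := ⟨hne1, hne2, hGp', hGq'⟩
              exact h2q ⟨hqv, h2 ▸ hAm⟩
          · rcases (hmem2 _).mp hb1 with hqu | hqv
            · exfalso
              have hGp' : G v p.2 := by rw [hpv] at hGp; exact hGp
              have hGq' : G u p.2 := by rw [← h2, hqu] at hGq; exact hGq
              have hAm : p.2 ∈ A := ⟨hne1, hne2, hGq', hGp'⟩
              exact h2p ⟨hpv, hAm⟩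
            · exact Prod.ext (hpv.trans hqv.symm) h2
        · exact absurd ⟨ha1, ha2⟩ (hnoBoth p ⟨hGp, h4p, h2p, h3p⟩)
  -- assemble edge counts
  have h0 : edgeCount G = {p : V × V | G p.1 p.2}.ncard := rfl
  have hstep1 : edgeCount G ≤ (S1 ∪ S2 ∪ S3 ∪ S4).ncard := by
    rw [h0]; exact Set.ncard_le_ncard hsplit (Set.toFinite _)
  have hstep2 := Set.ncard_union_le (S1 ∪ S2 ∪ S3) S4
  have hstep3 := Set.ncard_union_le (S1 ∪ S2) S3
  have hstep4 := Set.ncard_union_le S1 S2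
  have hEJdef : edgeCount (Contract G W2) = EJ.ncard := rfl
  rw [hn] at hbound
  omega
end
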